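/- Let p > 2, R ∈ (0,1), ϑ ∈ (0,1), β ∈ (1/2,1], and in dimension N = 1 define F_{R,ϑ,β}(τ,y) = ϑ((p-2)/(p-1))^((p-1)/(p-2)) (β(τ+R)/(τ+1) - |y|)₊^((p-1)/(p-2)). Then at any point (τ,y) with y ≠ 0 and 0 < β(τ+R)/(τ+1) - |y|, the quantity L := ∂_τ F - (1/(1+τ))(Δ_p F + y∂_y F - ((p-1)/(p-2))F) + |∂_y F|^(p-1) - F (with F = F_{R,ϑ,β}) equals ϑ[(β-ϑ^(p-2))/(1+τ) - (1-ϑ^(p-2)) F_{R,1,β}^((p-2)/(p-1))] · F_{R,1,β}^(1/(p-1)). -/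

import Mathlib

/-!
Where the positive part is active, `F = ϑ u^q` and `F₁ = u^q` with `q = (p-1)/(p-2)` and
`u = (β(τ+R)/(τ+1) - |y|)/q`. The exponent `q` is the Hölder conjugate of `p - 1`, i.e.
`(q-1)(p-1) = q`, so that `|∂_y F|^(p-1) = ϑ^(p-1) u^q` and the `p`-Laplacian flux
`|∂_y F|^(p-2) ∂_y F = -sign y · ϑ^(p-1) u^q` is again a multiple of the profile; hence
`Δ_p F = ϑ^(p-1) u^(q-1)`. Every term of `L` is then `ϑ u^(q-1)` times a polynomial in `u`,
`|y|` and `ϑ^(p-2)`, and `|y| = β(τ+R)/(τ+1) - q u` turns the sum into the claimed one.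
-/

open Real Set Filter Topology

lemma HasDerivAt.max_zero_rpow {f : ℝ → ℝ} {f' x : ℝ} (q : ℝ) (hf : HasDerivAt f f' x)
    (hx : 0 < f x) : HasDerivAt (fun t => max (f t) 0 ^ q) (f' * q * f x ^ (q - 1)) x := by
  have hev : (fun t => max (f t) 0 ^ q) =ᶠ[𝓝 x] fun t => f t ^ q := by
    filter_upwards [hf.continuousAt.eventually (lt_mem_nhds hx)] with t ht
    rw [max_eq_left ht.le]
  exact (hf.rpow_const (Or.inl hx.ne')).congr_of_eventuallyEq hev

lemma Real.HolderConjugate.rpow_sub_one_rpow {p q x : ℝ} (h : p.HolderConjugate q)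
    (hx : 0 ≤ x) : (x ^ (p - 1)) ^ q = x ^ p := by
  rw [← rpow_mul hx, h.sub_one_mul_conj]

lemma Real.HolderConjugate.rpow_rpow_one_div {p q x : ℝ} (h : p.HolderConjugate q)
    (hx : 0 ≤ x) : (x ^ p) ^ (1 / q) = x ^ (p - 1) := by
  rw [← rpow_mul hx, mul_one_div, h.div_conj_eq_sub_one]

lemma rpow_mul_max_zero_rpow {c : ℝ} (hc : 0 ≤ c) (x q : ℝ) :
    c ^ q * max x 0 ^ q = max (c * x) 0 ^ q := by
  rw [← mul_rpow hc (le_max_right _ _), mul_max_of_nonneg _ _ hc, mul_zero]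

lemma eventually_sign_eq {y : ℝ} (hy : y ≠ 0) : ∀ᶠ s in 𝓝 y, SignType.sign s = SignType.sign y :=
  continuousAt_sign_of_ne_zero hy ((isOpen_discrete {SignType.sign y}).mem_nhds rfl)

lemma sign_mul_sign_self {y : ℝ} (hy : y ≠ 0) : (SignType.sign y : ℝ) * SignType.sign y = 1 := by
  rcases hy.lt_or_gt with h | h <;> simp [h]

lemma abs_sign_of_ne_zero {y : ℝ} (hy : y ≠ 0) : |(SignType.sign y : ℝ)| = 1 := by
  rcases hy.lt_or_gt with h | h <;> simp [h]

lemma abs_rpow_sub_two_mul_sign_mul {p z : ℝ} (hp : p ≠ 1) (hz : 0 ≤ z) (σ : SignType) :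
    |(σ : ℝ) * z| ^ (p - 2) * (σ * z) = σ * z ^ (p - 1) := by
  rcases hz.eq_or_lt with rfl | hz
  · simp [zero_rpow (sub_ne_zero.2 hp)]
  have hpow : z ^ (p - 2) * z = z ^ (p - 1) := by
    rw [← rpow_add_one hz.ne']; ring_nf
  cases σ <;> simp [abs_of_pos hz, hpow]

lemma hasDerivAt_mul_add_div_add_one (β R : ℝ) {t : ℝ} (ht : t + 1 ≠ 0) :
    HasDerivAt (fun t => β * (t + R) / (t + 1)) (β * (1 - R) / (t + 1) ^ 2) t := by
  refine ((((hasDerivAt_id t).add_const R).const_mul β).div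
    ((hasDerivAt_id t).add_const 1) ht).congr_deriv ?_
  simp only [id]
  ring

section Profile

variable {A a c q y : ℝ}

lemma hasDerivAt_profile (hy : y ≠ 0) (hg : 0 < a - c * |y|) :
    HasDerivAt (fun s => A * max (a - c * |s|) 0 ^ q)
      (-SignType.sign y * (A * q * c) * (a - c * |y|) ^ (q - 1)) y := by
  refine (((((hasDerivAt_abs hy).const_mul c).const_sub a).max_zero_rpow q hg).const_mul
    A).congr_deriv ?_
  ring

lemma deriv_profile_eventuallyEq (hy : y ≠ 0) (hg : 0 < a - c * |y|) :
    deriv (fun s => A * max (a - c * |s|) 0 ^ q)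
      =ᶠ[𝓝 y] fun s => -SignType.sign y * (A * q * c) * max (a - c * |s|) 0 ^ (q - 1) := by
  have hg_ev : ∀ᶠ s in 𝓝 y, 0 < a - c * |s| :=
    (continuous_const.sub (continuous_const.mul continuous_abs)).continuousAt.eventually
      (lt_mem_nhds hg)
  filter_upwards [eventually_sign_eq hy, hg_ev, eventually_ne_nhds hy] with s hsign hs hs0
  rw [(hasDerivAt_profile hs0 hs).deriv, hsign, max_eq_left hs.le]

lemma abs_deriv_profile (hA : 0 ≤ A) (hq : 0 ≤ q) (hc : 0 ≤ c) (hy : y ≠ 0)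
    (hg : 0 < a - c * |y|) :
    |deriv (fun s => A * max (a - c * |s|) 0 ^ q) y| = A * q * c * (a - c * |y|) ^ (q - 1) := by
  rw [(hasDerivAt_profile hy hg).deriv, abs_mul, abs_mul, abs_neg, abs_sign_of_ne_zero hy,
    one_mul, abs_of_nonneg (by positivity), abs_of_nonneg (by positivity)]

lemma deriv_pFlux_profile {p : ℝ} (hA : 0 ≤ A) (hc : 0 ≤ c) (hpq : q.HolderConjugate (p - 1))
    (hy : y ≠ 0) (hg : 0 < a - c * |y|) :
    deriv (fun s => |deriv (fun s => A * max (a - c * |s|) 0 ^ q) s| ^ (p - 2)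
        * deriv (fun s => A * max (a - c * |s|) 0 ^ q) s) y
      = (A * q * c) ^ (p - 1) * (q * c) * (a - c * |y|) ^ (q - 1) := by
  have hq := hpq.nonneg
  have hflux : (fun s => |deriv (fun s => A * max (a - c * |s|) 0 ^ q) s| ^ (p - 2)
        * deriv (fun s => A * max (a - c * |s|) 0 ^ q) s)
      =ᶠ[𝓝 y] fun s => -SignType.sign y * (A * q * c) ^ (p - 1) * max (a - c * |s|) 0 ^ q := by
    filter_upwards [deriv_profile_eventuallyEq (A := A) (q := q) hy hg] with s hs
    have h := abs_rpow_sub_two_mul_sign_mul (sub_ne_zero.1 hpq.symm.ne_zero)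
      (by positivity : 0 ≤ A * q * c * max (a - c * |s|) 0 ^ (q - 1)) (-SignType.sign y)
    push_cast at h
    rw [hs, mul_assoc, h, mul_rpow (by positivity) (by positivity),
      hpq.rpow_sub_one_rpow (le_max_right _ _)]
    ring
  rw [hflux.deriv_eq, (hasDerivAt_profile hy hg).deriv]
  linear_combination (A * q * c) ^ (p - 1) * (q * c) * (a - c * |y|) ^ (q - 1) *
    sign_mul_sign_self hy

end Profile

theorem stmt9_general (p R ϑ β : ℝ) (hp : 2 < p)
    (hϑ : ϑ ∈ Ioo (0 : ℝ) 1)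
    (F F1 : ℝ → ℝ → ℝ)
    (hF : ∀ τ y, F τ y = ϑ * ((p - 2) / (p - 1)) ^ ((p - 1) / (p - 2)) *
      (max (β * (τ + R) / (τ + 1) - |y|) 0) ^ ((p - 1) / (p - 2)))
    (hF1 : ∀ τ y, F1 τ y = ((p - 2) / (p - 1)) ^ ((p - 1) / (p - 2)) *
      (max (β * (τ + R) / (τ + 1) - |y|) 0) ^ ((p - 1) / (p - 2)))
    (τ y : ℝ) (hτ : 0 < τ) (hy : y ≠ 0)
    (hpos : 0 < β * (τ + R) / (τ + 1) - |y|) :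
    deriv (fun t => F t y) τ
      - (1 / (1 + τ)) * (deriv (fun s => |deriv (F τ) s| ^ (p - 2) * deriv (F τ) s) y
          + y * deriv (F τ) y - ((p - 1) / (p - 2)) * F τ y)
      + |deriv (F τ) y| ^ (p - 1) - F τ y
    = ϑ * ((β - ϑ ^ (p - 2)) / (1 + τ)
        - (1 - ϑ ^ (p - 2)) * (F1 τ y) ^ ((p - 2) / (p - 1))) * (F1 τ y) ^ (1 / (p - 1)) := by
  obtain ⟨hϑ0, -⟩ := hϑ
  rw [← inv_div (p - 1)] at hF hF1 ⊢
  generalize hq_def : (p - 1) / (p - 2) = q at hF hF1 ⊢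
  have hq : q.HolderConjugate (p - 1) :=
    ((holderConjugate_iff_eq_conjExponent (by linarith)).2 (by rw [← hq_def]; ring_nf)).symm
  simp only [mul_assoc ϑ, rpow_mul_max_zero_rpow hq.inv_nonneg, mul_sub] at hF hF1
  set a := β * (τ + R) / (τ + 1) with ha
  set u := q⁻¹ * a - q⁻¹ * |y| with hu
  have hu0 : 0 < u := by rw [hu, ← mul_sub]; exact mul_pos hq.inv_pos hpos
  have hyu : |y| = a - q * u := by rw [hu]; field_simp [hq.ne_zero]; ring
  have hdτ : deriv (fun t => F t y) τ
      = ϑ * (β * (1 - R) / (τ + 1) ^ 2 * u ^ (q - 1)) := by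
    rw [show (fun t => F t y) = _ from funext (hF · y),
      ((((hasDerivAt_mul_add_div_add_one β R (by linarith)).const_mul q⁻¹).sub_const
        _).max_zero_rpow q hu0 |>.const_mul ϑ).deriv, mul_comm q⁻¹,
      inv_mul_cancel_right₀ hq.ne_zero]
  have hFτ : F τ = fun s => ϑ * max (q⁻¹ * a - q⁻¹ * |s|) 0 ^ q := funext (hF τ)
  have hF1y : F1 τ y = u ^ q := by rw [hF1, max_eq_left hu0.le]
  rw [hdτ, hF1y, hFτ, deriv_pFlux_profile hϑ0.le hq.inv_nonneg hq hy hu0,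
    abs_deriv_profile hϑ0.le hq.nonneg hq.inv_nonneg hy hu0, (hasDerivAt_profile hy hu0).deriv]
  simp only [← hu, max_eq_left hu0.le, mul_inv_cancel_right₀ hq.ne_zero,
    mul_inv_cancel₀ hq.ne_zero, mul_one]
  have hyterm : y * (-SignType.sign y * ϑ * u ^ (q - 1)) = -(a - q * u) * ϑ * u ^ (q - 1) := by
    rw [← hyu, ← self_mul_sign]; ring
  have huq : u ^ q = u ^ (q - 1) * u := by rw [← rpow_add_one hu0.ne']; ring_nf
  have hϑp : ϑ ^ (p - 1) = ϑ ^ (p - 2) * ϑ := by rw [← rpow_add_one hϑ0.ne']; ring_nf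
  rw [mul_rpow hϑ0.le (by positivity), hq.rpow_sub_one_rpow hu0.le,
    rpow_rpow_inv hu0.le hq.ne_zero, hq.rpow_rpow_one_div hu0.le, hyterm, huq, hϑp, ha]
  field_simp
  ring

/-- For `p > 2`, `R ∈ (0,1)`, `ϑ ∈ (0,1)`, `β ∈ (1/2,1]` and
`F_{R,ϑ,β}(τ,y) = ϑ((p-2)/(p-1))^((p-1)/(p-2)) (β(τ+R)/(τ+1) - |y|)₊^((p-1)/(p-2))`
in dimension `N = 1`: at any point `(τ,y)` with `τ > 0`, `y ≠ 0` and
`β(τ+R)/(τ+1) - |y| > 0`, the quantity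
`L = ∂_τ F - (1/(1+τ))(Δ_p F + y ∂_y F - ((p-1)/(p-2))F) + |∂_y F|^(p-1) - F`
(with `F = F_{R,ϑ,β}`) equals
`ϑ[(β-ϑ^(p-2))/(1+τ) - (1-ϑ^(p-2)) F_{R,1,β}^((p-2)/(p-1))] F_{R,1,β}^(1/(p-1))`. -/
theorem stmt9 (p R ϑ β : ℝ) (hp : 2 < p) (hR : R ∈ Ioo (0 : ℝ) 1)
    (hϑ : ϑ ∈ Ioo (0 : ℝ) 1) (hβ : β ∈ Ioc (1 / 2 : ℝ) 1)
    (F F1 : ℝ → ℝ → ℝ)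
    (hF : ∀ τ y, F τ y = ϑ * ((p - 2) / (p - 1)) ^ ((p - 1) / (p - 2)) *
      (max (β * (τ + R) / (τ + 1) - |y|) 0) ^ ((p - 1) / (p - 2)))
    (hF1 : ∀ τ y, F1 τ y = ((p - 2) / (p - 1)) ^ ((p - 1) / (p - 2)) *
      (max (β * (τ + R) / (τ + 1) - |y|) 0) ^ ((p - 1) / (p - 2)))
    (τ y : ℝ) (hτ : 0 < τ) (hy : y ≠ 0)
    (hpos : 0 < β * (τ + R) / (τ + 1) - |y|) :
    deriv (fun t => F t y) τ
      - (1 / (1 + τ)) * (deriv (fun s => |deriv (F τ) s| ^ (p - 2) * deriv (F τ) s) y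
          + y * deriv (F τ) y - ((p - 1) / (p - 2)) * F τ y)
      + |deriv (F τ) y| ^ (p - 1) - F τ y
    = ϑ * ((β - ϑ ^ (p - 2)) / (1 + τ)
        - (1 - ϑ ^ (p - 2)) * (F1 τ y) ^ ((p - 2) / (p - 1))) * (F1 τ y) ^ (1 / (p - 1)) :=
  stmt9_general p R ϑ β hp hϑ F F1 hF hF1 τ y hτ hy hpos
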